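/- arXiv:2506.03093 — 3 statements merged into one kernel-verified Lean document; each statement's English description precedes it below -/
import Mathlib

section
/- Suppose the dictionary D has unit-norm columns that span ℝ^m, and let δ = inf over unit vectors u of max_j |D_j^T u|. Then δ > 0, and each Matching Pursuit step satisfies ‖r^(t+1)‖₂² ≤ (1 - δ²)·‖r^(t)‖₂², so the residuals converge to zero geometrically: ‖r^(t)‖₂ ≤ (1-δ²)^{t/2}·‖r^(0)‖₂. -/
open RealInnerProductSpace

/-- Geometric convergence of Matching Pursuit with a unit-norm spanning
dictionary: with `δ` the infimum over unit vectors of the maximal absolute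
correlation with the atoms, `δ > 0`, each step contracts the squared residual
norm by a factor `1 - δ²`, and hence residuals converge geometrically. -/
theorem mp_geometric_convergence {m p : ℕ} (hm : 0 < m) (hp : 0 < p)
    (D : Fin p → EuclideanSpace ℝ (Fin m))
    (hD : ∀ i, ‖D i‖ = 1)
    (hspan : Submodule.span ℝ (Set.range D) = ⊤)
    (δ : ℝ)
    (hδ : δ = ⨅ u : Metric.sphere (0 : EuclideanSpace ℝ (Fin m)) 1,
        ⨆ i : Fin p, |⟪D i, (u : EuclideanSpace ℝ (Fin m))⟫|)
    (r : ℕ → EuclideanSpace ℝ (Fin m))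
    (j : ℕ → Fin p)
    (hj : ∀ t i, |⟪D i, r t⟫| ≤ |⟪D (j t), r t⟫|)
    (hr : ∀ t, r (t + 1) = r t - ⟪D (j t), r t⟫ • D (j t)) :
    0 < δ ∧
    (∀ t, ‖r (t + 1)‖ ^ 2 ≤ (1 - δ ^ 2) * ‖r t‖ ^ 2) ∧
    (∀ t, ‖r t‖ ≤ Real.sqrt ((1 - δ ^ 2) ^ t) * ‖r 0‖) := by
  haveI : Nonempty (Fin p) := ⟨⟨0, hp⟩⟩
  haveI : Nontrivial (EuclideanSpace ℝ (Fin m)) := by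
    have : 0 < Module.finrank ℝ (EuclideanSpace ℝ (Fin m)) := by
      simpa using hm
    exact Module.nontrivial_of_finrank_pos this
  set S := Metric.sphere (0 : EuclideanSpace ℝ (Fin m)) 1 with hS
  haveI : Nonempty S := (NormedSpace.sphere_nonempty.mpr zero_le_one).to_subtype
  set g : EuclideanSpace ℝ (Fin m) → ℝ := fun u => ⨆ i : Fin p, |⟪D i, u⟫| with hg
  have hg' : ∀ u, g u = Finset.univ.sup' Finset.univ_nonempty
      (fun i : Fin p => |⟪D i, u⟫|) := fun u =>
    (Finset.sup'_univ_eq_ciSup _).symm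
  have hgcont : Continuous g := by
    have : Continuous (fun u => Finset.univ.sup' Finset.univ_nonempty
        (fun i : Fin p => |⟪D i, u⟫|)) := by
      apply Continuous.finset_sup'_apply
      intro i _
      exact (continuous_const.inner continuous_id).abs
    exact (continuous_congr hg').mpr this
  have hgle : ∀ i (u : EuclideanSpace ℝ (Fin m)), |⟪D i, u⟫| ≤ g u := by
    intro i u
    rw [hg']
    exact Finset.le_sup' (fun i : Fin p => |⟪D i, u⟫|) (Finset.mem_univ i)
  -- the infimum is attained
  obtain ⟨u₀, hu₀S, hu₀min⟩ :=
    (isCompact_sphere (0 : EuclideanSpace ℝ (Fin m)) 1).exists_isMinOn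
      (NormedSpace.sphere_nonempty.mpr zero_le_one) hgcont.continuousOn
  have hδ_eq : δ = g u₀ := by
    rw [hδ]
    apply le_antisymm
    · refine ciInf_le ⟨0, ?_⟩ (⟨u₀, hu₀S⟩ : S)
      rintro x ⟨u, rfl⟩
      exact (abs_nonneg _).trans (hgle (Classical.arbitrary (Fin p)) u)
    · exact le_ciInf fun u => hu₀min u.2
  have hδ_le : ∀ u ∈ S, δ ≤ g u := by
    intro u hu; rw [hδ_eq]; exact hu₀min hu
  have hu₀norm : ‖u₀‖ = 1 := by simpa using hu₀S
  have hδpos : 0 < δ := by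
    rw [hδ_eq]
    rcases lt_or_ge 0 (g u₀) with h | h
    · exact h
    · exfalso
      have hzero : ∀ i, ⟪D i, u₀⟫ = 0 := by
        intro i
        have := (hgle i u₀).trans h
        have := abs_nonneg (⟪D i, u₀⟫)
        have : |⟪D i, u₀⟫| = 0 := le_antisymm ‹|⟪D i, u₀⟫| ≤ 0› this
        exact abs_eq_zero.mp this
      have : u₀ = 0 := by
        have hmem : u₀ ∈ (Submodule.span ℝ (Set.range D))ᗮ := by
          rw [Submodule.mem_orthogonal]
          intro x hx
          induction hx using Submodule.span_induction with
          | mem x hx => obtain ⟨i, rfl⟩ := hx; exact hzero i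
          | zero => simp
          | add x y _ _ hx hy => rw [inner_add_left, hx, hy]; ring
          | smul c x _ hx => rw [inner_smul_left, hx]; simp
        rw [hspan, Submodule.top_orthogonal_eq_bot] at hmem
        simpa using hmem
      rw [this] at hu₀norm; simp at hu₀norm
  have hδ1 : δ ≤ 1 := by
    rw [hδ_eq, hg']
    apply Finset.sup'_le
    intro i _
    calc |⟪D i, u₀⟫| ≤ ‖D i‖ * ‖u₀‖ := abs_real_inner_le_norm _ _
    _ = 1 := by rw [hD i, hu₀norm]; ring
  have hfac : 0 ≤ 1 - δ ^ 2 := by nlinarith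
  have hstep : ∀ t, ‖r (t + 1)‖ ^ 2 ≤ (1 - δ ^ 2) * ‖r t‖ ^ 2 := by
    intro t
    have hkey : δ * ‖r t‖ ≤ |⟪D (j t), r t⟫| := by
      rcases eq_or_ne (r t) 0 with h0 | h0
      · simp [h0]
      · have hn : ‖r t‖ ≠ 0 := norm_ne_zero_iff.mpr h0
        set u : EuclideanSpace ℝ (Fin m) := ‖r t‖⁻¹ • r t with hu
        have huS : u ∈ S := by
          simp [hu, hS, norm_smul, abs_of_nonneg (inv_nonneg.mpr (norm_nonneg _)),
            inv_mul_cancel₀ hn]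
        have h1 : g u ≤ ‖r t‖⁻¹ * |⟪D (j t), r t⟫| := by
          rw [hg']
          apply Finset.sup'_le
          intro i _
          rw [hu, real_inner_smul_right, abs_mul,
            abs_of_nonneg (inv_nonneg.mpr (norm_nonneg _))]
          exact mul_le_mul_of_nonneg_left (hj t i) (inv_nonneg.mpr (norm_nonneg _))
        have h2 := (hδ_le u huS).trans h1
        have hnpos : 0 < ‖r t‖ := (norm_nonneg _).lt_of_ne' hn
        calc δ * ‖r t‖ ≤ (‖r t‖⁻¹ * |⟪D (j t), r t⟫|) * ‖r t‖ :=
              mul_le_mul_of_nonneg_right h2 (norm_nonneg _)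
        _ = |⟪D (j t), r t⟫| := by field_simp
    set c := ⟪D (j t), r t⟫ with hc
    have hnorm : ‖r (t + 1)‖ ^ 2 = ‖r t‖ ^ 2 - c ^ 2 := by
      have h1 : ⟪r t, c • D (j t)⟫ = c ^ 2 := by
        rw [real_inner_smul_right, real_inner_comm, ← hc]; ring
      have h2 : ‖c • D (j t)‖ ^ 2 = c ^ 2 := by
        rw [norm_smul, hD (j t), mul_one, Real.norm_eq_abs, sq_abs]
      rw [hr t, ← hc, @norm_sub_sq_real, h1, h2]; ring
    have : δ ^ 2 * ‖r t‖ ^ 2 ≤ c ^ 2 := by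
      have h1 : (δ * ‖r t‖) ^ 2 ≤ |c| ^ 2 := by
        apply sq_le_sq'
        · nlinarith [abs_nonneg c, mul_nonneg hδpos.le (norm_nonneg (r t))]
        · exact hkey
      rw [sq_abs] at h1
      nlinarith
    nlinarith
  refine ⟨hδpos, hstep, ?_⟩
  intro t
  induction t with
  | zero => simp
  | succ t ih =>
    have h1 : ‖r (t + 1)‖ ^ 2 ≤ (1 - δ ^ 2) ^ (t + 1) * ‖r 0‖ ^ 2 := by
      have h2 : ‖r t‖ ^ 2 ≤ (Real.sqrt ((1 - δ ^ 2) ^ t) * ‖r 0‖) ^ 2 := by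
        apply sq_le_sq' _ ih
        nlinarith [norm_nonneg (r t), mul_nonneg (Real.sqrt_nonneg ((1 - δ ^ 2) ^ t)) (norm_nonneg (r 0))]
      have h3 : (Real.sqrt ((1 - δ ^ 2) ^ t) * ‖r 0‖) ^ 2 = (1 - δ ^ 2) ^ t * ‖r 0‖ ^ 2 := by
        rw [mul_pow, Real.sq_sqrt (pow_nonneg hfac t)]
      calc ‖r (t + 1)‖ ^ 2 ≤ (1 - δ ^ 2) * ‖r t‖ ^ 2 := hstep t
      _ ≤ (1 - δ ^ 2) * ((1 - δ ^ 2) ^ t * ‖r 0‖ ^ 2) := by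
          apply mul_le_mul_of_nonneg_left _ hfac
          rw [← h3]; exact h2
      _ = (1 - δ ^ 2) ^ (t + 1) * ‖r 0‖ ^ 2 := by ring
    calc ‖r (t + 1)‖ = Real.sqrt (‖r (t + 1)‖ ^ 2) := (Real.sqrt_sq (norm_nonneg _)).symm
    _ ≤ Real.sqrt ((1 - δ ^ 2) ^ (t + 1) * ‖r 0‖ ^ 2) := Real.sqrt_le_sqrt h1
    _ = Real.sqrt ((1 - δ ^ 2) ^ (t + 1)) * ‖r 0‖ := by
        rw [Real.sqrt_mul (pow_nonneg hfac _), Real.sqrt_sq (norm_nonneg _)]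
end

section
/- If the dictionary D has unit-norm columns spanning ℝ^m, then the Matching Pursuit reconstruction x̂^(t) = x - r^(t) converges to x as t → ∞. -/
/-!
Each step removes from the residual its component along a unit atom, so by Pythagoras
`‖r (t+1)‖² = ‖r t‖² - ⟪D (j t), r t⟫²`. Telescoping makes the squared selected
coefficients summable, hence they tend to `0`; by the greedy choice every coefficient
`⟪D i, r t⟫` is dominated by the selected one. Since the atoms span the finite-dimensional
space, `y ↦ (⟪D i, y⟫)ᵢ` is an injective linear map, hence a topological embedding, and so
`r t → 0`.
-/

open RealInnerProductSpace Filter Topology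

section Residual

variable {E : Type*} [NormedAddCommGroup E] [InnerProductSpace ℝ E]

theorem norm_sub_inner_smul_sq_of_norm_eq_one {u : E} (hu : ‖u‖ = 1) (v : E) :
    ‖v - ⟪u, v⟫ • u‖ ^ 2 = ‖v‖ ^ 2 - ⟪u, v⟫ ^ 2 := by
  rw [norm_sub_sq_real, real_inner_smul_right, real_inner_comm, norm_smul, hu,
    Real.norm_eq_abs, mul_one, sq_abs]
  ring

variable {u r : ℕ → E}

theorem summable_inner_sq_of_eq_sub_inner_smul (hu : ∀ t, ‖u t‖ = 1)
    (hr : ∀ t, r (t + 1) = r t - ⟪u t, r t⟫ • u t) :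
    Summable fun t => ⟪u t, r t⟫ ^ 2 := by
  have hstep : ∀ t, ⟪u t, r t⟫ ^ 2 = ‖r t‖ ^ 2 - ‖r (t + 1)‖ ^ 2 := fun t => by
    rw [hr, norm_sub_inner_smul_sq_of_norm_eq_one (hu t)]
    ring
  refine summable_of_sum_range_le (c := ‖r 0‖ ^ 2) (fun t => sq_nonneg _) fun n => ?_
  rw [Finset.sum_congr rfl fun t _ => hstep t, Finset.sum_range_sub']
  linarith [sq_nonneg ‖r n‖]

theorem tendsto_inner_of_eq_sub_inner_smul (hu : ∀ t, ‖u t‖ = 1)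
    (hr : ∀ t, r (t + 1) = r t - ⟪u t, r t⟫ • u t) :
    Tendsto (fun t => ⟪u t, r t⟫) atTop (𝓝 0) := by
  have hsq := (summable_inner_sq_of_eq_sub_inner_smul hu hr).tendsto_atTop_zero
  rw [tendsto_zero_iff_abs_tendsto_zero]
  simpa [Function.comp_def, Real.sqrt_sq_eq_abs] using (Real.continuous_sqrt.tendsto 0).comp hsq

end Residual

section Spanning

variable {E ι α : Type*} [NormedAddCommGroup E] [InnerProductSpace ℝ E] {D : ι → E}

theorem ker_pi_innerₛₗ_eq_bot_of_span_eq_top (hspan : Submodule.span ℝ (Set.range D) = ⊤) :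
    LinearMap.ker (LinearMap.pi fun i => innerₛₗ ℝ (D i)) = ⊥ := by
  refine (Submodule.eq_bot_iff _).mpr fun y hy => ?_
  have horth : Submodule.span ℝ (Set.range D) ⟂ Submodule.span ℝ {y} := by
    rw [Submodule.isOrtho_span]
    rintro _ ⟨i, rfl⟩ _ rfl
    simpa using congrFun hy i
  rwa [hspan, Submodule.isOrtho_top_left, Submodule.span_singleton_eq_bot] at horth

theorem tendsto_zero_of_tendsto_inner_of_span_eq_top [FiniteDimensional ℝ E]
    (hspan : Submodule.span ℝ (Set.range D) = ⊤) {l : Filter α} {r : α → E}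
    (h : ∀ i, Tendsto (fun t => ⟪D i, r t⟫) l (𝓝 0)) : Tendsto r l (𝓝 0) := by
  have hemb := (LinearMap.isClosedEmbedding_of_injective
    (ker_pi_innerₛₗ_eq_bot_of_span_eq_top hspan)).isEmbedding
  rw [hemb.tendsto_nhds_iff, map_zero, tendsto_pi_nhds]
  simpa using h

end Spanning

theorem mp_reconstruction_converges_general {m p : ℕ}
    (D : Fin p → EuclideanSpace ℝ (Fin m))
    (hD : ∀ i, ‖D i‖ = 1)
    (hspan : Submodule.span ℝ (Set.range D) = ⊤)
    (x : EuclideanSpace ℝ (Fin m))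
    (r : ℕ → EuclideanSpace ℝ (Fin m))
    (j : ℕ → Fin p)
    (hj : ∀ t i, |⟪D i, r t⟫| ≤ |⟪D (j t), r t⟫|)
    (hr : ∀ t, r (t + 1) = r t - ⟪D (j t), r t⟫ • D (j t)) :
    Filter.Tendsto (fun t => x - r t) Filter.atTop (nhds x) := by
  have hselected : Tendsto (fun t => ⟪D (j t), r t⟫) atTop (𝓝 0) :=
    tendsto_inner_of_eq_sub_inner_smul (fun t => hD (j t)) hr
  have hcoef : ∀ i, Tendsto (fun t => ⟪D i, r t⟫) atTop (𝓝 0) := fun i =>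
    squeeze_zero_norm (fun t => hj t i) (by simpa using hselected.abs)
  have hresidual : Tendsto r atTop (𝓝 0) :=
    tendsto_zero_of_tendsto_inner_of_span_eq_top hspan hcoef
  simpa using tendsto_const_nhds.sub hresidual

/-- If the unit-norm columns of the dictionary span `ℝ^m`, the Matching
Pursuit reconstructions `x̂^(t) = x - r^(t)` converge to the input `x`. -/
theorem mp_reconstruction_converges {m p : ℕ}
    (D : Fin p → EuclideanSpace ℝ (Fin m))
    (hD : ∀ i, ‖D i‖ = 1)
    (hspan : Submodule.span ℝ (Set.range D) = ⊤)
    (x : EuclideanSpace ℝ (Fin m))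
    (r : ℕ → EuclideanSpace ℝ (Fin m)) (hr0 : r 0 = x)
    (j : ℕ → Fin p)
    (hj : ∀ t i, |⟪D i, r t⟫| ≤ |⟪D (j t), r t⟫|)
    (hr : ∀ t, r (t + 1) = r t - ⟪D (j t), r t⟫ • D (j t)) :
    Filter.Tendsto (fun t => x - r t) Filter.atTop (nhds x) :=
  mp_reconstruction_converges_general D hD hspan x r j hj hr
end

section
/- If the Babel function satisfies μ₁(k-1) < 1, then any k columns of the dictionary D are linearly independent. -/
open RealInnerProductSpace

/-- The Babel function of a dictionary `D`. -/
noncomputable def babel {m p : ℕ} (D : Fin p → EuclideanSpace ℝ (Fin m))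
    (r : ℕ) : ℝ :=
  sSup {t : ℝ | ∃ S : Finset (Fin p), S.card = r ∧
    ∃ j ∉ S, t = ∑ i ∈ S, |⟪D i, D j⟫|}

lemma le_babel {m p : ℕ} (D : Fin p → EuclideanSpace ℝ (Fin m)) (r : ℕ)
    (S : Finset (Fin p)) (hS : S.card = r) (j : Fin p) (hj : j ∉ S) :
    ∑ i ∈ S, |⟪D i, D j⟫| ≤ babel D r := by
  apply le_csSup
  · have hsub : {t : ℝ | ∃ S : Finset (Fin p), S.card = r ∧
        ∃ j ∉ S, t = ∑ i ∈ S, |⟪D i, D j⟫|} ⊆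
        Set.range (fun Sj : Finset (Fin p) × Fin p => ∑ i ∈ Sj.1, |⟪D i, D Sj.2⟫|) := by
      rintro t ⟨S, -, j, -, rfl⟩
      exact ⟨(S, j), rfl⟩
    exact ((Set.finite_range _).subset hsub).bddAbove
  · exact ⟨S, hS, j, hj, rfl⟩

/-- If `μ₁(k-1) < 1`, then any `k` columns of `D` are linearly independent. -/
theorem babel_linear_independence {m p : ℕ}
    (D : Fin p → EuclideanSpace ℝ (Fin m))
    (hD : ∀ i, ‖D i‖ = 1)
    (k : ℕ) (hbabel : babel D (k - 1) < 1) :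
    ∀ S : Finset (Fin p), S.card = k →
      LinearIndependent ℝ (fun i : S => D i) := by
  intro S hS
  rw [Fintype.linearIndependent_iff]
  intro g hg
  by_contra hne
  push_neg at hne
  obtain ⟨i₁, hi₁⟩ := hne
  have hNe : (Finset.univ : Finset S).Nonempty := ⟨i₁, Finset.mem_univ _⟩
  obtain ⟨i₀, -, hmax⟩ := Finset.exists_max_image Finset.univ (fun i => |g i|) hNe
  have hg0 : 0 < |g i₀| :=
    lt_of_lt_of_le (abs_pos.mpr hi₁) (hmax i₁ (Finset.mem_univ _))
  -- inner product of the dependence relation with D i₀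
  have hip : ∑ i : S, g i * ⟪D (i : Fin p), D (i₀ : Fin p)⟫ = 0 := by
    have h := congrArg (fun v => ⟪v, D (i₀ : Fin p)⟫) hg
    simpa only [sum_inner, real_inner_smul_left, inner_zero_left] using h
  have hself : ⟪D (i₀ : Fin p), D (i₀ : Fin p)⟫ = 1 := by
    rw [real_inner_self_eq_norm_mul_norm, hD]; ring
  have hsplit : g i₀ + ∑ i ∈ Finset.univ.erase i₀,
      g i * ⟪D (i : Fin p), D (i₀ : Fin p)⟫ = 0 := by
    have h := Finset.add_sum_erase Finset.univ
      (fun i : S => g i * ⟪D (i : Fin p), D (i₀ : Fin p)⟫) (Finset.mem_univ i₀)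
    simp only [hself, mul_one] at h
    linarith
  -- translate the erased sum of inner products to a sum over S.erase ↑i₀
  have hi₀S : (i₀ : Fin p) ∈ S := i₀.2
  have hsum_eq : ∀ F : Fin p → ℝ,
      ∑ i ∈ (Finset.univ : Finset S).erase i₀, F (i : Fin p)
        = ∑ i ∈ S.erase (i₀ : Fin p), F i := by
    intro F
    rw [Finset.sum_erase_eq_sub (Finset.mem_univ i₀),
        Finset.sum_erase_eq_sub hi₀S, Finset.sum_coe_sort S F]
  have hcard : (S.erase (i₀ : Fin p)).card = k - 1 := by
    rw [Finset.card_erase_of_mem hi₀S, hS]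
  have hb : ∑ i ∈ (Finset.univ : Finset S).erase i₀,
      |⟪D (i : Fin p), D (i₀ : Fin p)⟫| ≤ babel D (k - 1) := by
    rw [hsum_eq (fun x => |⟪D x, D (i₀ : Fin p)⟫|)]
    exact le_babel D (k - 1) _ hcard _ (Finset.notMem_erase _ _)
  -- the chain of inequalities
  have h1 : |g i₀| ≤ ∑ i ∈ (Finset.univ : Finset S).erase i₀,
      |g i| * |⟪D (i : Fin p), D (i₀ : Fin p)⟫| := by
    have : g i₀ = -∑ i ∈ (Finset.univ : Finset S).erase i₀,
        g i * ⟪D (i : Fin p), D (i₀ : Fin p)⟫ := by linarith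
    calc |g i₀| = |∑ i ∈ (Finset.univ : Finset S).erase i₀,
          g i * ⟪D (i : Fin p), D (i₀ : Fin p)⟫| := by rw [this, abs_neg]
      _ ≤ ∑ i ∈ (Finset.univ : Finset S).erase i₀,
          |g i * ⟪D (i : Fin p), D (i₀ : Fin p)⟫| := Finset.abs_sum_le_sum_abs _ _
      _ = ∑ i ∈ (Finset.univ : Finset S).erase i₀,
          |g i| * |⟪D (i : Fin p), D (i₀ : Fin p)⟫| := by simp [abs_mul]
  have h2 : ∑ i ∈ (Finset.univ : Finset S).erase i₀,
      |g i| * |⟪D (i : Fin p), D (i₀ : Fin p)⟫|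
      ≤ |g i₀| * ∑ i ∈ (Finset.univ : Finset S).erase i₀,
        |⟪D (i : Fin p), D (i₀ : Fin p)⟫| := by
    rw [Finset.mul_sum]
    apply Finset.sum_le_sum
    intro i _
    exact mul_le_mul_of_nonneg_right (hmax i (Finset.mem_univ _)) (abs_nonneg _)
  have h3 : |g i₀| * ∑ i ∈ (Finset.univ : Finset S).erase i₀,
      |⟪D (i : Fin p), D (i₀ : Fin p)⟫| ≤ |g i₀| * babel D (k - 1) :=
    mul_le_mul_of_nonneg_left hb (abs_nonneg _)
  have h4 : |g i₀| * babel D (k - 1) < |g i₀| * 1 :=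
    (mul_lt_mul_iff_right₀ hg0).mpr hbabel
  linarith
end
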